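/- Let G be a group, Γ a group acting on G by group automorphisms (writing g^γ for the action), and let G ⋊ Γ be the corresponding semidirect product with canonical injection i : G → G ⋊ Γ and canonical splitting s : Γ → G ⋊ Γ. Let N be the normal closure in G ⋊ Γ of the image s(Γ), and let q : G ⋊ Γ → (G ⋊ Γ)/N be the quotient map. Then the composite homomorphism q ∘ i : G → (G ⋊ Γ)/N is surjective, and its kernel equals the subgroup of G generated by {g⁻¹ · g^γ : g ∈ G, γ ∈ Γ}. Consequently the Zariski–van Kampen quotient G ⫽ Γ is isomorphic to (G ⋊ Γ)/N. -/

import Mathlib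

open SemidirectProduct

/-- The subgroup `N_Γ` of `G` generated by `{g⁻¹ * g^γ : g ∈ G, γ ∈ Γ}`, for a group `Γ` acting
on a group `G` by group automorphisms (encoded as `φ : Γ →* MulAut G`).  The Zariski–van Kampen
quotient `G ⫽ Γ` is `G ⧸ zvkSubgroup φ`. -/
def zvkSubgroup {G Γ : Type*} [Group G] [Group Γ] (φ : Γ →* MulAut G) : Subgroup G :=
  Subgroup.closure {x : G | ∃ (g : G) (γ : Γ), x = g⁻¹ * φ γ g}

/-- The subgroup `N_Γ` is a normal subgroup of `G` (so that the Zariski–van Kampen quotient is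
a group). -/
instance zvkSubgroup_normal {G Γ : Type*} [Group G] [Group Γ] (φ : Γ →* MulAut G) :
    (zvkSubgroup φ).Normal := by
  constructor
  intro n hn
  induction hn using Subgroup.closure_induction with
  | mem x hx =>
      intro g
      obtain ⟨a, γ, rfl⟩ := hx
      have h1 : (a * g⁻¹)⁻¹ * φ γ (a * g⁻¹) ∈ zvkSubgroup φ :=
        Subgroup.subset_closure ⟨a * g⁻¹, γ, rfl⟩
      have h2 : (g⁻¹)⁻¹ * φ γ g⁻¹ ∈ zvkSubgroup φ :=
        Subgroup.subset_closure ⟨g⁻¹, γ, rfl⟩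
      have key : g * (a⁻¹ * φ γ a) * g⁻¹ =
          ((a * g⁻¹)⁻¹ * φ γ (a * g⁻¹)) * ((g⁻¹)⁻¹ * φ γ g⁻¹)⁻¹ := by
        simp only [map_mul]
        group
      rw [key]
      exact mul_mem h1 (inv_mem h2)
  | one => intro g; simpa using one_mem _
  | mul x y hx hy ihx ihy =>
      intro g
      have key : g * (x * y) * g⁻¹ = (g * x * g⁻¹) * (g * y * g⁻¹) := by group
      rw [key]
      exact mul_mem (ihx g) (ihy g)
  | inv x hx ihx =>
      intro g
      have key : g * x⁻¹ * g⁻¹ = (g * x * g⁻¹)⁻¹ := by group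
      rw [key]
      exact inv_mem (ihx g)

/-!
Killing `s(Γ)` in `G ⋊ Γ` identifies every `i(g^γ) = s(γ) i(g) s(γ)⁻¹` with `i(g)`, so `N_Γ` dies in
the quotient, and every `(g, γ) = i(g) s(γ)` becomes `i(g)`. Conversely, since `Γ` acts trivially on
`G ⫽ Γ`, the map `(g, γ) ↦ [g]` is a homomorphism `G ⋊ Γ → G ⫽ Γ` that kills `s(Γ)` and restricts to
the quotient map on `G`; hence an element of `G` killed by the normal closure of `s(Γ)` lies in `N_Γ`.
-/

namespace SemidirectProduct

variable {G Γ : Type*} [Group G] [Group Γ] {φ : Γ →* MulAut G}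

section QuotientContainingInr

variable {N : Subgroup (G ⋊[φ] Γ)} [N.Normal]

theorem mk_inl_left (hN : ∀ γ, inr γ ∈ N) (x : G ⋊[φ] Γ) :
    ((inl x.left : G ⋊[φ] Γ) : (G ⋊[φ] Γ) ⧸ N) = x := by
  conv_rhs => rw [← inl_left_mul_inr_right x]
  rw [QuotientGroup.mk_mul, (QuotientGroup.eq_one_iff _).2 (hN _), mul_one]

theorem surjective_mk'_comp_inl (hN : ∀ γ, inr γ ∈ N) :
    Function.Surjective ((QuotientGroup.mk' N).comp inl) :=
  fun x => QuotientGroup.induction_on x fun x => ⟨x.left, mk_inl_left hN x⟩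

theorem mk_inl_aut (hN : ∀ γ, inr γ ∈ N) (γ : Γ) (g : G) :
    ((inl (φ γ g) : G ⋊[φ] Γ) : (G ⋊[φ] Γ) ⧸ N) = (inl g : G ⋊[φ] Γ) := by
  rw [inl_aut, QuotientGroup.mk_mul, QuotientGroup.mk_mul, (QuotientGroup.eq_one_iff _).2 (hN γ),
    (QuotientGroup.eq_one_iff _).2 (hN γ⁻¹), one_mul, mul_one]

theorem zvkSubgroup_le_ker_mk'_comp_inl (hN : ∀ γ, inr γ ∈ N) :
    zvkSubgroup φ ≤ ((QuotientGroup.mk' N).comp inl).ker := by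
  refine (Subgroup.closure_le _).2 ?_
  rintro _ ⟨g, γ, rfl⟩
  simp only [SetLike.mem_coe, MonoidHom.mem_ker, MonoidHom.comp_apply, QuotientGroup.mk'_apply,
    map_mul, map_inv, mk_inl_aut hN, inv_mul_cancel]

end QuotientContainingInr

theorem inv_mul_aut_mem_zvkSubgroup (γ : Γ) (g : G) : g⁻¹ * φ γ g ∈ zvkSubgroup φ :=
  Subgroup.subset_closure ⟨g, γ, rfl⟩

theorem mk_aut_zvkSubgroup (γ : Γ) (g : G) : ((φ γ g : G) : G ⧸ zvkSubgroup φ) = g :=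
  (QuotientGroup.eq.2 (inv_mul_aut_mem_zvkSubgroup γ g)).symm

variable (φ) in
def toZvkQuotient : G ⋊[φ] Γ →* G ⧸ zvkSubgroup φ :=
  lift (QuotientGroup.mk' _) 1 fun γ => by
    ext g
    simp [mk_aut_zvkSubgroup]

@[simp]
theorem toZvkQuotient_inl (g : G) : toZvkQuotient φ (inl g) = g :=
  lift_inl _ _ _ g

@[simp]
theorem toZvkQuotient_inr (γ : Γ) : toZvkQuotient φ (inr γ) = 1 :=
  lift_inr _ _ _ γ

theorem normalClosure_range_inr_le_ker_toZvkQuotient :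
    Subgroup.normalClosure (Set.range fun γ : Γ => (inr γ : G ⋊[φ] Γ)) ≤
      (toZvkQuotient φ).ker :=
  Subgroup.normalClosure_le_normal (by rintro _ ⟨γ, rfl⟩; exact toZvkQuotient_inr γ)

theorem ker_mk'_comp_inl_le_zvkSubgroup :
    ((QuotientGroup.mk' (Subgroup.normalClosure
        (Set.range fun γ : Γ => (inr γ : G ⋊[φ] Γ)))).comp inl).ker ≤ zvkSubgroup φ := by
  intro g hg
  rw [MonoidHom.mem_ker, MonoidHom.comp_apply, QuotientGroup.mk'_apply,
    QuotientGroup.eq_one_iff] at hg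
  simpa using normalClosure_range_inr_le_ker_toZvkQuotient hg

end SemidirectProduct

/-- Let `G` be a group, `Γ` a group acting on `G` by group automorphisms
(encoded as `φ : Γ →* MulAut G`), and `G ⋊[φ] Γ` the semidirect product, with canonical
injection `inl : G →* G ⋊[φ] Γ` and canonical splitting `inr : Γ →* G ⋊[φ] Γ`.  Let `N` be the
normal closure in `G ⋊[φ] Γ` of the image `inr Γ`, and let `q` be the quotient map
`G ⋊[φ] Γ →* (G ⋊[φ] Γ) ⧸ N`.  Then the composite `q ∘ inl : G → (G ⋊[φ] Γ) ⧸ N` is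
surjective, and its kernel equals the subgroup of `G` generated by
`{g⁻¹ * g^γ : g ∈ G, γ ∈ Γ}`.  Consequently the Zariski–van Kampen quotient `G ⫽ Γ` is
isomorphic to `(G ⋊[φ] Γ) ⧸ N`. -/
theorem zvk_quotient_eq_semidirectProduct_quotient {G Γ : Type*} [Group G] [Group Γ]
    (φ : Γ →* MulAut G) :
    Function.Surjective
      ((QuotientGroup.mk' (Subgroup.normalClosure
          (Set.range fun γ : Γ => (inr γ : G ⋊[φ] Γ)))).comp inl) ∧
    ((QuotientGroup.mk' (Subgroup.normalClosure
          (Set.range fun γ : Γ => (inr γ : G ⋊[φ] Γ)))).comp inl).ker = zvkSubgroup φ ∧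
    Nonempty ((G ⧸ zvkSubgroup φ) ≃*
      ((G ⋊[φ] Γ) ⧸ Subgroup.normalClosure
          (Set.range fun γ : Γ => (inr γ : G ⋊[φ] Γ)))) := by
  have hinr : ∀ γ : Γ, (inr γ : G ⋊[φ] Γ) ∈
      Subgroup.normalClosure (Set.range fun γ : Γ => (inr γ : G ⋊[φ] Γ)) :=
    fun γ => Subgroup.subset_normalClosure ⟨γ, rfl⟩
  have hsurj := surjective_mk'_comp_inl hinr
  have hker := le_antisymm ker_mk'_comp_inl_le_zvkSubgroup (zvkSubgroup_le_ker_mk'_comp_inl hinr)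
  exact ⟨hsurj, hker, ⟨(QuotientGroup.quotientMulEquivOfEq hker.symm).trans
    (QuotientGroup.quotientKerEquivOfSurjective _ hsurj)⟩⟩
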